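/- arXiv:math/0305239 — 2 statements merged into one kernel-verified Lean document; each statement's English description precedes it below -/
import Mathlib

section
/- If n ≥ r and ω = (1,…,1,0,…,0) ∈ Λ(n,r) (r ones), then the algebra 1_ω S_K(n,r) 1_ω is isomorphic to the group algebra KΣ_r. -/
/-!
The sequences of weight `ω` are exactly the `i₀ ∘ σ` with `i₀ = Fin.castLE` and `σ ∈ Σ_r`, so
`Σ_r` acts simply transitively on them. An element `x` of `1_ω S 1_ω` is then determined by the
coefficients `a_x σ = x δ_{i₀} (i₀ ∘ σ)`: equivariance gives
`x f (i₀ ∘ τ) = ∑ h, a_x (τ * h⁻¹) * f (i₀ ∘ h)`, which is the convolution of `K Σ_r`, so `x ↦ a_x`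
is multiplicative. The endomorphisms `f ↦ (i₀ ∘ π ↦ f (i₀ ∘ g⁻¹ π))` lie in `1_ω S 1_ω` and have
`a = δ_g`, which gives surjectivity, and for `g = 1` this endomorphism is `1_ω` itself.
-/

open scoped BigOperators

namespace SchurPaper

variable (K : Type*) [Field K] (n r : ℕ)

abbrev TSp := (Fin r → Fin n) → K

def wt (i : Fin r → Fin n) : Fin n → ℕ :=
  fun j => (Finset.univ.filter fun k => i k = j).card

lemma wt_comp (i : Fin r → Fin n) (σ : Equiv.Perm (Fin r)) :
    wt n r (i ∘ σ) = wt n r i := by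
  funext j
  exact Finset.card_equiv σ (fun k => by simp [Function.comp])

def placePerm (σ : Equiv.Perm (Fin r)) : TSp K n r →ₗ[K] TSp K n r :=
  LinearMap.funLeft K K fun i => i ∘ σ

def proj (lam : Fin n → ℕ) : TSp K n r →ₗ[K] TSp K n r where
  toFun f := fun i => if wt n r i = lam then f i else 0
  map_add' f g := by
    funext i; by_cases h : wt n r i = lam <;> simp [h]
  map_smul' c f := by
    funext i; by_cases h : wt n r i = lam <;> simp [h]

def heckeBimodule (lam mu : Fin n → ℕ) : Submodule K (Module.End K (TSp K n r)) where
  carrier := {x | (∀ σ, x ∘ₗ placePerm K n r σ = placePerm K n r σ ∘ₗ x) ∧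
      proj K n r lam ∘ₗ x ∘ₗ proj K n r mu = x}
  add_mem' := by
    rintro x y ⟨hx1, hx2⟩ ⟨hy1, hy2⟩
    refine ⟨fun σ => ?_, ?_⟩
    · rw [LinearMap.add_comp, LinearMap.comp_add, hx1 σ, hy1 σ]
    · conv_lhs => rw [LinearMap.add_comp, LinearMap.comp_add]
      rw [hx2, hy2]
  zero_mem' := ⟨fun σ => by simp, by simp⟩
  smul_mem' := by
    rintro c x ⟨hx1, hx2⟩
    refine ⟨fun σ => ?_, ?_⟩
    · rw [LinearMap.smul_comp, LinearMap.comp_smul, hx1 σ]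
    · conv_lhs => rw [LinearMap.smul_comp, LinearMap.comp_smul]
      rw [hx2]

abbrev Mmod (lam : Fin n → ℕ) := {i : Fin r → Fin n // wt n r i = lam} → K

def permM (lam : Fin n → ℕ) (σ : Equiv.Perm (Fin r)) :
    Mmod K n r lam →ₗ[K] Mmod K n r lam :=
  LinearMap.funLeft K K fun p => ⟨p.1 ∘ σ, by rw [wt_comp, p.2]⟩

def HomSigma (mu lam : Fin n → ℕ) : Submodule K (Mmod K n r mu →ₗ[K] Mmod K n r lam) where
  carrier := {φ | ∀ σ, φ ∘ₗ permM K n r mu σ = permM K n r lam σ ∘ₗ φ}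
  add_mem' := by
    intro φ ψ hφ hψ σ
    rw [LinearMap.add_comp, LinearMap.comp_add, hφ σ, hψ σ]
  zero_mem' := fun σ => by simp
  smul_mem' := by
    intro c φ hφ σ
    rw [LinearMap.smul_comp, LinearMap.comp_smul, hφ σ]

def iotaM (lam : Fin n → ℕ) : Mmod K n r lam →ₗ[K] TSp K n r where
  toFun f := fun i => if h : wt n r i = lam then f ⟨i, h⟩ else 0
  map_add' f g := by funext i; by_cases h : wt n r i = lam <;> simp [h]
  map_smul' c f := by funext i; by_cases h : wt n r i = lam <;> simp [h]

def resM (lam : Fin n → ℕ) : TSp K n r →ₗ[K] Mmod K n r lam :=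
  LinearMap.funLeft K K Subtype.val

/-- The special weight `ω = (1^r, 0^{n-r})`. -/
def omegaWt : Fin n → ℕ := fun j => if (j : ℕ) < r then 1 else 0


section OmegaSequences

variable {n r}

lemma wt_castLE (hnr : r ≤ n) : wt n r (Fin.castLE hnr) = omegaWt n r := by
  funext j
  by_cases hj : (j : ℕ) < r
  · have : Finset.univ.filter (fun k : Fin r => Fin.castLE hnr k = j) = {⟨j, hj⟩} := by
      ext k
      simp [Fin.ext_iff]
    simp [wt, omegaWt, hj, this]
  · have : Finset.univ.filter (fun k : Fin r => Fin.castLE hnr k = j) = ∅ := by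
      ext k
      simp only [Finset.mem_filter, Finset.mem_univ, true_and, Finset.notMem_empty, iff_false]
      rintro rfl
      exact hj k.isLt
    simp [wt, omegaWt, hj, this]

lemma val_lt_of_wt_eq_omegaWt {i : Fin r → Fin n} (hi : wt n r i = omegaWt n r) (k : Fin r) :
    (i k : ℕ) < r := by
  by_contra hk
  have hpos : 0 < wt n r i (i k) := Finset.card_pos.mpr ⟨k, by simp⟩
  simp [hi, omegaWt, hk] at hpos

lemma injective_of_wt_eq_omegaWt {i : Fin r → Fin n} (hi : wt n r i = omegaWt n r) :
    Function.Injective i := by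
  intro k l hkl
  have hone : wt n r i (i k) = 1 := by simp [hi, omegaWt, val_lt_of_wt_eq_omegaWt hi k]
  exact Finset.card_le_one.mp hone.le k (by simp) l (by simp [hkl])

noncomputable def omegaPerm {i : Fin r → Fin n} (hi : wt n r i = omegaWt n r) :
    Equiv.Perm (Fin r) :=
  Equiv.ofBijective (fun k => ⟨i k, val_lt_of_wt_eq_omegaWt hi k⟩) <|
    Finite.injective_iff_bijective.mp fun _ _ hkl =>
      injective_of_wt_eq_omegaWt hi (Fin.ext (Fin.mk.inj hkl))

lemma castLE_comp_omegaPerm (hnr : r ≤ n) {i : Fin r → Fin n} (hi : wt n r i = omegaWt n r) :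
    Fin.castLE hnr ∘ ⇑(omegaPerm hi) = i :=
  funext fun _ => Fin.ext rfl

lemma omegaPerm_comp {i : Fin r → Fin n} (hi : wt n r i = omegaWt n r) (σ : Equiv.Perm (Fin r))
    (hiσ : wt n r (i ∘ ⇑σ) = omegaWt n r) : omegaPerm hiσ = omegaPerm hi * σ :=
  Equiv.ext fun _ => Fin.ext rfl

lemma castLE_comp_injective (hnr : r ≤ n) :
    Function.Injective fun σ : Equiv.Perm (Fin r) => Fin.castLE hnr ∘ ⇑σ :=
  fun _ _ h => Equiv.ext fun k => Fin.castLE_injective hnr (congrFun h k)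

lemma wt_castLE_comp (hnr : r ≤ n) (σ : Equiv.Perm (Fin r)) :
    wt n r (Fin.castLE hnr ∘ ⇑σ) = omegaWt n r := by
  rw [wt_comp, wt_castLE]

lemma omegaPerm_castLE_comp (hnr : r ≤ n) (σ : Equiv.Perm (Fin r))
    (h : wt n r (Fin.castLE hnr ∘ ⇑σ) = omegaWt n r) : omegaPerm h = σ :=
  castLE_comp_injective hnr (castLE_comp_omegaPerm hnr h)

end OmegaSequences

section HeckeBimodule

variable {K n r}

lemma placePerm_single (σ : Equiv.Perm (Fin r)) (j : Fin r → Fin n) (c : K) :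
    placePerm K n r σ (Pi.single j c) = Pi.single (j ∘ ⇑σ⁻¹) c := by
  funext i
  simp only [placePerm, LinearMap.funLeft_apply, Pi.single_apply, Equiv.Perm.inv_def,
    Equiv.eq_comp_symm]

lemma proj_proj (lam : Fin n → ℕ) (f : TSp K n r) :
    proj K n r lam (proj K n r lam f) = proj K n r lam f := by
  funext i
  by_cases hi : wt n r i = lam <;> simp [proj, hi]

variable {lam mu : Fin n → ℕ} {x : Module.End K (TSp K n r)}

lemma apply_eq_zero_of_mem_heckeBimodule (hx : x ∈ heckeBimodule K n r lam mu)
    (f : TSp K n r) {i : Fin r → Fin n} (hi : wt n r i ≠ lam) : x f i = 0 := by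
  rw [← hx.2]
  simp [proj, hi]

lemma apply_proj_of_mem_heckeBimodule (hx : x ∈ heckeBimodule K n r lam mu) (f : TSp K n r) :
    x (proj K n r mu f) = x f := by
  rw [← hx.2]
  simp [proj_proj]

lemma apply_comp_of_mem_heckeBimodule (hx : x ∈ heckeBimodule K n r lam mu) (f : TSp K n r)
    (i : Fin r → Fin n) (σ : Equiv.Perm (Fin r)) :
    x f (i ∘ ⇑σ) = x (placePerm K n r σ f) i :=
  congrFun (LinearMap.congr_fun (hx.1 σ) f).symm i

lemma apply_single_comp_of_mem_heckeBimodule (hx : x ∈ heckeBimodule K n r lam mu)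
    (j : Fin r → Fin n) (σ : Equiv.Perm (Fin r)) (c : K) (i : Fin r → Fin n) :
    x (Pi.single (j ∘ ⇑σ) c) i = x (Pi.single j c) (i ∘ ⇑σ⁻¹) := by
  rw [apply_comp_of_mem_heckeBimodule hx, placePerm_single, inv_inv]

end HeckeBimodule

section OmegaHecke

variable {K n r} (hnr : r ≤ n)

lemma proj_omegaWt_eq_sum (f : TSp K n r) :
    proj K n r (omegaWt n r) f = ∑ h : Equiv.Perm (Fin r),
      f (Fin.castLE hnr ∘ ⇑h) • Pi.single (Fin.castLE hnr ∘ ⇑h) 1 := by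
  funext i
  simp only [proj, LinearMap.coe_mk, AddHom.coe_mk, Finset.sum_apply, Pi.smul_apply,
    Pi.single_apply, smul_eq_mul, mul_ite, mul_one, mul_zero]
  by_cases hi : wt n r i = omegaWt n r
  · have hcond : ∀ h : Equiv.Perm (Fin r), i = Fin.castLE hnr ∘ ⇑h ↔ omegaPerm hi = h := by
      intro h
      rw [← (castLE_comp_injective hnr).eq_iff, castLE_comp_omegaPerm hnr hi]
    simp only [hi, if_true, hcond, Finset.sum_ite_eq, Finset.mem_univ,
      castLE_comp_omegaPerm hnr hi]
  · refine (if_neg hi).trans (Finset.sum_eq_zero fun h _ => if_neg ?_).symm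
    rintro rfl
    exact hi (wt_castLE_comp hnr h)

def heckeCoeff : Module.End K (TSp K n r) →ₗ[K] (Equiv.Perm (Fin r) → K) where
  toFun x g := x (Pi.single (Fin.castLE hnr) 1) (Fin.castLE hnr ∘ ⇑g)
  map_add' _ _ := rfl
  map_smul' _ _ := rfl

lemma apply_castLE_comp_eq_sum {lam : Fin n → ℕ} {x : Module.End K (TSp K n r)}
    (hx : x ∈ heckeBimodule K n r lam (omegaWt n r)) (f : TSp K n r) (τ : Equiv.Perm (Fin r)) :
    x f (Fin.castLE hnr ∘ ⇑τ) =
      ∑ h, heckeCoeff hnr x (τ * h⁻¹) * f (Fin.castLE hnr ∘ ⇑h) := by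
  rw [← apply_proj_of_mem_heckeBimodule hx, proj_omegaWt_eq_sum hnr, map_sum, Finset.sum_apply]
  refine Finset.sum_congr rfl fun h _ => ?_
  rw [map_smul, Pi.smul_apply, smul_eq_mul, mul_comm,
    apply_single_comp_of_mem_heckeBimodule hx]
  rfl

lemma heckeCoeff_mul {lam : Fin n → ℕ} {x : Module.End K (TSp K n r)}
    (hx : x ∈ heckeBimodule K n r lam (omegaWt n r)) (y : Module.End K (TSp K n r))
    (τ : Equiv.Perm (Fin r)) :
    heckeCoeff hnr (x * y) τ = ∑ h, heckeCoeff hnr x (τ * h⁻¹) * heckeCoeff hnr y h :=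
  apply_castLE_comp_eq_sum hnr hx _ τ

noncomputable def heckeBasisElem (g : Equiv.Perm (Fin r)) : Module.End K (TSp K n r) where
  toFun f i := if hi : wt n r i = omegaWt n r then f (Fin.castLE hnr ∘ ⇑(g⁻¹ * omegaPerm hi)) else 0
  map_add' f f' := by funext i; by_cases hi : wt n r i = omegaWt n r <;> simp [hi]
  map_smul' c f := by funext i; by_cases hi : wt n r i = omegaWt n r <;> simp [hi]

lemma heckeBasisElem_mem (g : Equiv.Perm (Fin r)) :
    heckeBasisElem (K := K) hnr g ∈ heckeBimodule K n r (omegaWt n r) (omegaWt n r) := by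
  refine ⟨fun σ => LinearMap.ext fun f => funext fun i => ?_,
    LinearMap.ext fun f => funext fun i => ?_⟩
  · by_cases hi : wt n r i = omegaWt n r
    · have hiσ : wt n r (i ∘ ⇑σ) = omegaWt n r := by rw [wt_comp, hi]
      simp only [heckeBasisElem, placePerm, LinearMap.comp_apply, LinearMap.funLeft_apply,
        LinearMap.coe_mk, AddHom.coe_mk, dif_pos hi, dif_pos hiσ, omegaPerm_comp hi σ hiσ]
      rfl
    · have hiσ : ¬ wt n r (i ∘ ⇑σ) = omegaWt n r := by rwa [wt_comp]
      simp [heckeBasisElem, placePerm, hi, hiσ]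
  · by_cases hi : wt n r i = omegaWt n r
    · simp only [heckeBasisElem, proj, LinearMap.comp_apply, LinearMap.coe_mk, AddHom.coe_mk,
        dif_pos hi, if_pos hi, if_pos (wt_castLE_comp hnr _)]
    · simp [heckeBasisElem, proj, hi]

lemma heckeBasisElem_one : heckeBasisElem (K := K) hnr 1 = proj K n r (omegaWt n r) := by
  refine LinearMap.ext fun f => funext fun i => ?_
  by_cases hi : wt n r i = omegaWt n r
  · simp [heckeBasisElem, proj, hi, castLE_comp_omegaPerm hnr hi]
  · simp [heckeBasisElem, proj, hi]

lemma heckeCoeff_heckeBasisElem (g : Equiv.Perm (Fin r)) :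
    heckeCoeff hnr (heckeBasisElem (K := K) hnr g) = Pi.single g 1 := by
  funext τ
  simp only [heckeCoeff, heckeBasisElem, LinearMap.coe_mk, AddHom.coe_mk,
    dif_pos (wt_castLE_comp hnr τ), omegaPerm_castLE_comp, Pi.single_apply]
  refine if_congr ?_ rfl rfl
  change Fin.castLE hnr ∘ ⇑(g⁻¹ * τ) = Fin.castLE hnr ∘ ⇑(1 : Equiv.Perm (Fin r)) ↔ τ = g
  rw [(castLE_comp_injective hnr).eq_iff, inv_mul_eq_one, eq_comm]

lemma heckeCoeff_proj_omegaWt :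
    heckeCoeff hnr (proj K n r (omegaWt n r)) = Pi.single 1 1 := by
  rw [← heckeBasisElem_one hnr, heckeCoeff_heckeBasisElem]

lemma eq_zero_of_heckeCoeff_eq_zero {x : Module.End K (TSp K n r)}
    (hx : x ∈ heckeBimodule K n r (omegaWt n r) (omegaWt n r)) (h0 : heckeCoeff hnr x = 0) :
    x = 0 := by
  refine LinearMap.ext fun f => funext fun i => ?_
  by_cases hi : wt n r i = omegaWt n r
  · rw [← castLE_comp_omegaPerm hnr hi, apply_castLE_comp_eq_sum hnr hx, h0]
    simp
  · exact apply_eq_zero_of_mem_heckeBimodule hx f hi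

noncomputable def heckeCoeffEquiv :
    heckeBimodule K n r (omegaWt n r) (omegaWt n r) ≃ₗ[K] (Equiv.Perm (Fin r) → K) :=
  LinearEquiv.ofBijective (heckeCoeff hnr ∘ₗ Submodule.subtype _) <| by
    refine ⟨(injective_iff_map_eq_zero _).mpr fun x hx =>
      Subtype.ext (eq_zero_of_heckeCoeff_eq_zero hnr x.2 hx), fun c => ?_⟩
    refine ⟨∑ g, c g • ⟨heckeBasisElem hnr g, heckeBasisElem_mem hnr g⟩, ?_⟩
    simp only [map_sum, map_smul, LinearMap.comp_apply, Submodule.subtype_apply,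
      heckeCoeff_heckeBasisElem]
    simp_rw [← Pi.single_smul', smul_eq_mul, mul_one]
    exact Finset.univ_sum_single c

noncomputable def heckeGroupAlgebraEquiv :
    heckeBimodule K n r (omegaWt n r) (omegaWt n r) ≃ₗ[K] MonoidAlgebra K (Equiv.Perm (Fin r)) :=
  (heckeCoeffEquiv hnr).trans <|
    (Finsupp.linearEquivFunOnFinite K K _).symm.trans (MonoidAlgebra.coeffLinearEquiv K).symm

lemma coeff_heckeGroupAlgebraEquiv (x : heckeBimodule K n r (omegaWt n r) (omegaWt n r))
    (g : Equiv.Perm (Fin r)) :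
    (heckeGroupAlgebraEquiv hnr x).coeff g = heckeCoeff hnr x g :=
  rfl

end OmegaHecke

theorem hecke_omega_iso_groupAlgebra (hnr : r ≤ n) :
    ∃ e : ↥(heckeBimodule K n r (omegaWt n r) (omegaWt n r))
            ≃ₗ[K] MonoidAlgebra K (Equiv.Perm (Fin r)),
      (∀ x y z : ↥(heckeBimodule K n r (omegaWt n r) (omegaWt n r)),
        (z : Module.End K (TSp K n r))
            = (x : Module.End K (TSp K n r)) * (y : Module.End K (TSp K n r)) →
        e z = e x * e y) ∧
      e ⟨proj K n r (omegaWt n r), by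
          constructor
          · intro σ
            refine LinearMap.ext fun f => funext fun i => ?_
            simp [proj, placePerm, LinearMap.funLeft, wt_comp]
          · refine LinearMap.ext fun f => funext fun i => ?_
            by_cases h : wt n r i = omegaWt n r <;> simp [proj, h]⟩ = 1 := by
  refine ⟨heckeGroupAlgebraEquiv hnr, fun x y z hz => ?_, ?_⟩
  · ext τ
    rw [MonoidAlgebra.coeff_mul_apply_right, Finsupp.sum_fintype _ _ (by simp)]
    simp only [coeff_heckeGroupAlgebraEquiv, hz, heckeCoeff_mul hnr x.2]
  · ext τ
    rw [coeff_heckeGroupAlgebraEquiv, heckeCoeff_proj_omegaWt, MonoidAlgebra.one_def,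
      MonoidAlgebra.coeff_single, Finsupp.single_apply, Pi.single_apply]
    exact if_congr eq_comm rfl rfl

end SchurPaper
end

section
/- For n ≥ r, End_{GL_n(K)}(E^{⊗r}) ≅ KΣ_r, where GL_n(K) acts diagonally on E^{⊗r} and Σ_r acts by place permutations (classical Schur–Weyl duality statement on the endomorphism algebra). -/
/-!
A centralizer `T` of `GL_n(K)` also commutes with the image of every matrix: along the line
`g + t • 1` the entries of the commutator are polynomials in `t` vanishing off the finite
spectrum of `-g`, and `K` is infinite. Fix an injection `e : Fin r → Fin n` and write `δ_j` for
the basis vector at `j : Fin r → Fin n`. Diagonal matrices force `T` to preserve weights, so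
`T δ_e` is supported on the place permutations `e ∘ σ` and agrees with `Φ(a) δ_e` for some
`a ∈ KΣ_r`, where `Φ` is the place permutation representation. Every `δ_j` is the image of `δ_e`
under some matrix, so a centralizer is determined by its value on `δ_e`; hence `T = Φ(a)`.
`Φ` is injective because the coordinates of `Φ(a) δ_e` at `e ∘ σ` are the coefficients of `a`.
-/

open scoped BigOperators

namespace SchurPaper

variable (K : Type*) [Field K] (n r : ℕ)

noncomputable def glAct (g : Matrix (Fin n) (Fin n) K) : Module.End K (TSp K n r) :=
  Matrix.toLin' (Matrix.of fun i j : Fin r → Fin n => ∏ k, g (i k) (j k))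

open Matrix Polynomial

section TensorPowMatrix

variable {R S ι m : Type*} [CommRing R] [CommRing S] [Fintype ι]

def tensorPowMatrix (g : Matrix m m R) : Matrix (ι → m) (ι → m) R :=
  Matrix.of fun i j => ∏ k, g (i k) (j k)

@[simp]
lemma tensorPowMatrix_apply (g : Matrix m m R) (i j : ι → m) :
    tensorPowMatrix g i j = ∏ k, g (i k) (j k) := rfl

lemma tensorPowMatrix_mapMatrix [DecidableEq ι] [Fintype m] [DecidableEq m] (f : R →+* S)
    (g : Matrix m m R) :
    f.mapMatrix (tensorPowMatrix g : Matrix (ι → m) (ι → m) R) =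
      tensorPowMatrix (f.mapMatrix g) := by
  ext i j
  simp

lemma tensorPowMatrix_diagonal [DecidableEq m] (d : m → R) :
    (tensorPowMatrix (diagonal d) : Matrix (ι → m) (ι → m) R) =
      diagonal fun i => ∏ k, d (i k) := by
  ext i j
  by_cases hij : i = j
  · simp [hij]
  · obtain ⟨k, hk⟩ := Function.ne_iff.mp hij
    simpa [hij] using Finset.prod_eq_zero (Finset.mem_univ k) (by simp [hk])

lemma exists_tensorPowMatrix_mulVec_single [DecidableEq ι] [Fintype m] [DecidableEq m]
    {e : ι → m} (he : Function.Injective e) (j : ι → m) :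
    ∃ g : Matrix m m R, tensorPowMatrix g *ᵥ Pi.single e 1 = Pi.single j 1 := by
  refine ⟨Matrix.of fun b c => Function.extend e (fun k => if b = j k then 1 else 0) 0 c, ?_⟩
  ext i
  simp [he.extend_apply, Finset.prod_boole, funext_iff, Pi.single_apply]

end TensorPowMatrix

lemma exists_perm_eq_comp_of_card_fiber_eq {ι m : Type*} [Fintype ι] [DecidableEq m]
    {i j : ι → m} (h : ∀ b, Fintype.card {k // i k = b} = Fintype.card {k // j k = b}) :
    ∃ σ : Equiv.Perm ι, i = j ∘ σ :=
  ⟨Equiv.ofFiberEquiv fun b => Fintype.equivOfCardEq (h b),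
    funext fun k => (Equiv.ofFiberEquiv_map _ k).symm⟩

section InfiniteDomain

variable {R ι m : Type*} [CommRing R] [IsDomain R] [Infinite R] [Fintype ι] [DecidableEq m]

lemma eq_of_forall_pow_eq_pow {a b : ℕ} (h : ∀ t : R, t ^ a = t ^ b) : a = b := by
  have := Polynomial.funext (p := (X : R[X]) ^ a) (q := X ^ b) (by simpa using h)
  simpa using congrArg natDegree this

lemma card_fiber_eq_of_forall_prod_eq {i j : ι → m}
    (h : ∀ d : m → R, ∏ k, d (i k) = ∏ k, d (j k)) (b : m) :
    Fintype.card {k // i k = b} = Fintype.card {k // j k = b} := by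
  simp only [Fintype.card_subtype]
  refine eq_of_forall_pow_eq_pow (R := R) fun t => ?_
  simpa [Finset.prod_ite] using h (fun c => if c = b then t else 1)

lemma exists_perm_of_commute_diagonal [DecidableEq ι] [Fintype m]
    {M : Matrix (ι → m) (ι → m) R} (hM : ∀ d : m → R, Commute (tensorPowMatrix (diagonal d)) M)
    {i j : ι → m} (hij : M i j ≠ 0) : ∃ σ : Equiv.Perm ι, i = j ∘ σ := by
  refine exists_perm_eq_comp_of_card_fiber_eq (card_fiber_eq_of_forall_prod_eq (R := R) fun d => ?_)
  have := congrFun₂ (hM d).eq i j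
  rw [tensorPowMatrix_diagonal, diagonal_mul, mul_diagonal, mul_comm] at this
  exact mul_left_cancel₀ hij this

end InfiniteDomain

lemma commute_tensorPowMatrix_of_forall_units {K ι m : Type*} [Field K] [Infinite K] [Fintype ι]
    [DecidableEq ι] [Fintype m] [DecidableEq m] {M : Matrix (ι → m) (ι → m) K}
    (hM : ∀ u : GL m K, Commute (tensorPowMatrix (u : Matrix m m K)) M) (g : Matrix m m K) :
    Commute (tensorPowMatrix g) M := by
  set G : Matrix m m K[X] := C.mapMatrix g + (X : K[X]) • (1 : Matrix m m K[X])
  have hG : ∀ t, (evalRingHom t).mapMatrix G = g + t • (1 : Matrix m m K) := fun t => by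
    ext a b
    by_cases hab : a = b <;> simp [G, one_apply, hab]
  set P : Matrix (ι → m) (ι → m) K[X] :=
    tensorPowMatrix G * C.mapMatrix M - C.mapMatrix M * tensorPowMatrix G
  have hP : ∀ t, (evalRingHom t).mapMatrix P =
      tensorPowMatrix (g + t • (1 : Matrix m m K)) * M -
        M * tensorPowMatrix (g + t • (1 : Matrix m m K)) := fun t => by
    have hMC : (evalRingHom t).mapMatrix (C.mapMatrix M) = M := by ext; simp
    simp only [P, map_sub, map_mul, tensorPowMatrix_mapMatrix, hG, hMC]
  have hroot : ∀ t ∉ spectrum K (-g), (evalRingHom t).mapMatrix P = 0 := fun t ht => by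
    rw [spectrum.notMem_iff, Algebra.algebraMap_eq_smul_one, sub_neg_eq_add, add_comm] at ht
    rw [hP, sub_eq_zero]
    exact hM ht.unit
  have hP0 : P = 0 := by
    refine Matrix.ext fun a b => ?_
    refine eq_zero_of_infinite_isRoot _ ((Matrix.finite_spectrum (-g)).infinite_compl.mono ?_)
    exact fun t ht => congrFun₂ (hroot t ht) a b
  simpa [Commute, SemiconjBy, hP0, sub_eq_zero] using (hP 0).symm

section GLAction

variable {K n r}

lemma glAct_apply (g : Matrix (Fin n) (Fin n) K) (x : TSp K n r) (i : Fin r → Fin n) :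
    glAct K n r g x i = ∑ j, (∏ k, g (i k) (j k)) * x j := by
  simp [glAct, mulVec, dotProduct]

lemma commute_glAct_iff {g : Matrix (Fin n) (Fin n) K} {T : Module.End K (TSp K n r)} :
    Commute (glAct K n r g) T ↔ Commute (tensorPowMatrix g) (LinearMap.toMatrixAlgEquiv' T) := by
  rw [← commute_map_iff Matrix.toLinAlgEquiv'.injective, Matrix.toLinAlgEquiv'_toMatrixAlgEquiv']
  rfl

lemma mem_centralizer_iff_forall_commute_glAct [Infinite K] {T : Module.End K (TSp K n r)} :
    T ∈ Subalgebra.centralizer K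
        (Set.range fun g : GL (Fin n) K => glAct K n r (g : Matrix (Fin n) (Fin n) K)) ↔
      ∀ g, Commute (glAct K n r g) T := by
  rw [Subalgebra.mem_centralizer_iff]
  refine ⟨fun hT g => commute_glAct_iff.mpr ?_, fun hT _ ⟨u, hu⟩ => hu ▸ hT u⟩
  exact commute_tensorPowMatrix_of_forall_units (fun u => commute_glAct_iff.mp (hT _ ⟨u, rfl⟩)) g

lemma exists_perm_of_apply_single_ne_zero [Infinite K] {T : Module.End K (TSp K n r)}
    (hT : ∀ g, Commute (glAct K n r g) T) {i j : Fin r → Fin n} (h : T (Pi.single j 1) i ≠ 0) :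
    ∃ σ : Equiv.Perm (Fin r), i = j ∘ σ :=
  exists_perm_of_commute_diagonal (fun _ => commute_glAct_iff.mp (hT _))
    (by rwa [LinearMap.toMatrixAlgEquiv'_apply])

lemma ext_of_commute_glAct {e : Fin r → Fin n} (he : Function.Injective e)
    {T T' : Module.End K (TSp K n r)} (hT : ∀ g, Commute (glAct K n r g) T)
    (hT' : ∀ g, Commute (glAct K n r g) T') (h : T (Pi.single e 1) = T' (Pi.single e 1)) :
    T = T' := by
  refine Module.Basis.ext (Pi.basisFun K _) fun j => ?_
  obtain ⟨g, hg⟩ := exists_tensorPowMatrix_mulVec_single (R := K) he j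
  have hj : glAct K n r g (Pi.single e 1) = Pi.single j 1 := hg
  rw [Pi.basisFun_apply, ← hj, ← Module.End.mul_apply, ← (hT g).eq, Module.End.mul_apply, h,
    ← Module.End.mul_apply, (hT' g).eq, Module.End.mul_apply]

end GLAction

section PlacePermutations

variable {K n r}

@[simp]
lemma placePerm_apply (σ : Equiv.Perm (Fin r)) (x : TSp K n r) (i : Fin r → Fin n) :
    placePerm K n r σ x i = x (i ∘ σ) := rfl

lemma commute_glAct_placePerm (g : Matrix (Fin n) (Fin n) K) (σ : Equiv.Perm (Fin r)) :
    Commute (glAct K n r g) (placePerm K n r σ) := by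
  refine LinearMap.ext fun x => funext fun i => ?_
  simp only [Module.End.mul_apply, glAct_apply, placePerm_apply]
  refine Fintype.sum_equiv (σ.symm.arrowCongr (Equiv.refl (Fin n))) _ _ fun j => ?_
  rw [← Equiv.prod_comp σ]
  rfl

variable (K n r) in
@[simps]
def placePermHom : Equiv.Perm (Fin r) →* Module.End K (TSp K n r) where
  toFun := placePerm K n r
  map_one' := rfl
  map_mul' _ _ := rfl

variable (K n r) in
noncomputable def placePermAlgHom :
    MonoidAlgebra K (Equiv.Perm (Fin r)) →ₐ[K] Module.End K (TSp K n r) :=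
  MonoidAlgebra.lift K _ _ (placePermHom K n r)

lemma placePermAlgHom_apply (a : MonoidAlgebra K (Equiv.Perm (Fin r))) (x : TSp K n r)
    (i : Fin r → Fin n) : placePermAlgHom K n r a x i = ∑ σ, a.coeff σ * x (i ∘ σ) := by
  rw [placePermAlgHom, MonoidAlgebra.lift_apply, Finsupp.sum_fintype _ _ (by simp)]
  simp

lemma placePermAlgHom_apply_single_comp {e : Fin r → Fin n} (he : Function.Injective e)
    (a : MonoidAlgebra K (Equiv.Perm (Fin r))) (σ : Equiv.Perm (Fin r)) :
    placePermAlgHom K n r a (Pi.single e 1) (e ∘ σ) = a.coeff σ⁻¹ := by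
  have hτ : ∀ τ : Equiv.Perm (Fin r), (e ∘ σ) ∘ τ = e ↔ τ = σ⁻¹ := fun τ => by
    calc (e ∘ σ) ∘ τ = e ↔ e ∘ ⇑(σ * τ) = e ∘ ⇑(1 : Equiv.Perm (Fin r)) := Iff.rfl
      _ ↔ σ * τ = 1 := he.comp_left.eq_iff.trans DFunLike.coe_fn_eq
      _ ↔ τ = σ⁻¹ := mul_eq_one_iff_eq_inv'
  simp [placePermAlgHom_apply, Pi.single_apply, hτ]

lemma placePermAlgHom_injective {e : Fin r → Fin n} (he : Function.Injective e) :
    Function.Injective (placePermAlgHom K n r) := by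
  rw [injective_iff_map_eq_zero]
  intro a ha
  ext σ
  simpa [ha] using (placePermAlgHom_apply_single_comp he a σ⁻¹).symm

lemma commute_glAct_placePermAlgHom (g : Matrix (Fin n) (Fin n) K)
    (a : MonoidAlgebra K (Equiv.Perm (Fin r))) :
    Commute (glAct K n r g) (placePermAlgHom K n r a) := by
  induction a using MonoidAlgebra.induction_linear with
  | zero => simp
  | add a b ha hb => simpa using ha.add_right hb
  | single σ c => simpa [placePermAlgHom] using (commute_glAct_placePerm g σ).smul_right c

lemma range_placePermAlgHom [Infinite K] {e : Fin r → Fin n} (he : Function.Injective e) :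
    (placePermAlgHom K n r).range = Subalgebra.centralizer K
      (Set.range fun g : GL (Fin n) K => glAct K n r (g : Matrix (Fin n) (Fin n) K)) := by
  ext T
  rw [AlgHom.mem_range, mem_centralizer_iff_forall_commute_glAct]
  refine ⟨fun ⟨a, hTa⟩ g => hTa ▸ commute_glAct_placePermAlgHom g a, fun hT => ?_⟩
  set v := T (Pi.single e 1)
  set a : MonoidAlgebra K (Equiv.Perm (Fin r)) :=
    MonoidAlgebra.ofCoeff (Finsupp.equivFunOnFinite.symm fun σ => v (e ∘ ⇑σ⁻¹))
  have ha := fun g => commute_glAct_placePermAlgHom (n := n) g a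
  refine ⟨a, ext_of_commute_glAct he ha hT (funext fun i => ?_)⟩
  by_cases hi : ∃ σ : Equiv.Perm (Fin r), i = e ∘ σ
  · obtain ⟨σ, rfl⟩ := hi
    simp [a, placePermAlgHom_apply_single_comp he, v, Equiv.Perm.inv_def]
  · rw [not_not.mp (mt (exists_perm_of_apply_single_ne_zero ha) hi),
      not_not.mp (mt (exists_perm_of_apply_single_ne_zero hT) hi)]

end PlacePermutations

theorem schur_weyl_duality [Infinite K] (hnr : r ≤ n) :
    ∃ e : MonoidAlgebra K (Equiv.Perm (Fin r)) ≃ₐ[K]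
        ↥(Subalgebra.centralizer K
            (Set.range fun g : GL (Fin n) K =>
              glAct K n r (g : Matrix (Fin n) (Fin n) K))),
      ∀ σ : Equiv.Perm (Fin r),
        ((e (MonoidAlgebra.of K (Equiv.Perm (Fin r)) σ) : Module.End K (TSp K n r))
          = placePerm K n r σ) := by
  have he := Fin.castLE_injective hnr
  refine ⟨(AlgEquiv.ofInjective _ (placePermAlgHom_injective he)).trans
    (Subalgebra.equivOfEq _ _ (range_placePermAlgHom he)), fun σ => ?_⟩
  exact MonoidAlgebra.lift_of _ σ

end SchurPaper
end
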